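/- The function G is twice differentiable at y* and its second derivative there equals G″(y*) = φ(y*)·(ρ/√(1−ρ²))·φ(x). In particular G″(y*) < 0 when ρ < 0 and G″(y*) > 0 when ρ > 0. -/

import Mathlib

/-!
By the fundamental theorem of calculus, `G'(y) = (Φ(x) − Φ(w y)) φ(y)` with
`w y = (x − ρy)/√(1−ρ²)`. In the derivative of this product, the term carrying the factor
`Φ(x) − Φ(w y)` vanishes at `y*`, which is exactly the point where `w y* = x`; what remains is
`φ(w y*) · (ρ/√(1−ρ²)) · φ(y*) = φ(x) · (ρ/√(1−ρ²)) · φ(y*)`.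
-/

open MeasureTheory Real

/-- The standard normal density `φ(u) = (2π)^{-1/2} exp(-u²/2)`. -/
noncomputable def stdNormalPDF (u : ℝ) : ℝ := (Real.sqrt (2 * π))⁻¹ * Real.exp (-u ^ 2 / 2)

/-- The standard normal CDF `Φ(x) = ∫_{-∞}^x φ(u) du`. -/
noncomputable def stdNormalCDF (x : ℝ) : ℝ := ∫ u in Set.Iic x, stdNormalPDF u

/-- `G(y) = Φ(x)Φ(y) − ∫_{−∞}^{y} Φ((x − ρu)/√(1−ρ²)) φ(u) du`. -/
noncomputable def Gfun (ρ x y : ℝ) : ℝ :=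
  stdNormalCDF x * stdNormalCDF y
    - ∫ u in Set.Iic y, stdNormalCDF ((x - ρ * u) / Real.sqrt (1 - ρ ^ 2)) * stdNormalPDF u

/-- `y* = x(1 − √(1−ρ²))/ρ`. -/
noncomputable def ystar (ρ x : ℝ) : ℝ := x * (1 - Real.sqrt (1 - ρ ^ 2)) / ρ

open ProbabilityTheory

theorem hasDerivAt_setIntegral_Iic {E : Type*} [NormedAddCommGroup E] [NormedSpace ℝ E]
    [CompleteSpace E] {f : ℝ → E} {y : ℝ} (hf : Integrable f) (hfy : ContinuousAt f y) :
    HasDerivAt (fun z => ∫ u in Set.Iic z, f u) (f y) y := by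
  have hsplit : (fun z => ∫ u in Set.Iic z, f u)
      = fun z => (∫ u in Set.Iic 0, f u) + ∫ u in (0 : ℝ)..z, f u := by
    funext z
    rw [← intervalIntegral.integral_Iic_sub_Iic hf.integrableOn hf.integrableOn]
    abel
  rw [hsplit]
  exact (intervalIntegral.integral_hasDerivAt_right hf.intervalIntegrable
    hf.aestronglyMeasurable.stronglyMeasurableAtFilter hfy).const_add _

theorem stdNormalPDF_eq_gaussianPDFReal : stdNormalPDF = gaussianPDFReal 0 1 := by
  funext u
  simp [stdNormalPDF, gaussianPDFReal]

theorem stdNormalPDF_pos (u : ℝ) : 0 < stdNormalPDF u := by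
  unfold stdNormalPDF
  positivity

theorem continuous_stdNormalPDF : Continuous stdNormalPDF := by
  unfold stdNormalPDF
  fun_prop

theorem integrable_stdNormalPDF : Integrable stdNormalPDF :=
  stdNormalPDF_eq_gaussianPDFReal ▸ integrable_gaussianPDFReal 0 1

theorem integral_stdNormalPDF : ∫ u, stdNormalPDF u = 1 :=
  stdNormalPDF_eq_gaussianPDFReal ▸ integral_gaussianPDFReal_eq_one 0 one_ne_zero

theorem hasDerivAt_stdNormalPDF (y : ℝ) : HasDerivAt stdNormalPDF (-y * stdNormalPDF y) y := by
  unfold stdNormalPDF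
  exact (((hasDerivAt_pow 2 y).fun_neg.div_const 2).exp.const_mul _).congr_deriv
    (by push_cast; ring)

theorem hasDerivAt_stdNormalCDF (y : ℝ) : HasDerivAt stdNormalCDF (stdNormalPDF y) y :=
  hasDerivAt_setIntegral_Iic integrable_stdNormalPDF continuous_stdNormalPDF.continuousAt

theorem continuous_stdNormalCDF : Continuous stdNormalCDF :=
  continuous_iff_continuousAt.2 fun y => (hasDerivAt_stdNormalCDF y).continuousAt

theorem stdNormalCDF_nonneg (t : ℝ) : 0 ≤ stdNormalCDF t :=
  setIntegral_nonneg measurableSet_Iic fun u _ => (stdNormalPDF_pos u).le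

theorem stdNormalCDF_le_one (t : ℝ) : stdNormalCDF t ≤ 1 :=
  integral_stdNormalPDF ▸ setIntegral_le_integral integrable_stdNormalPDF
    (.of_forall fun u => (stdNormalPDF_pos u).le)

theorem integrable_stdNormalCDF_comp_mul_stdNormalPDF {g : ℝ → ℝ} (hg : Measurable g) :
    Integrable fun u => stdNormalCDF (g u) * stdNormalPDF u :=
  integrable_stdNormalPDF.bdd_mul (c := 1)
    (continuous_stdNormalCDF.measurable.comp hg).aestronglyMeasurable (.of_forall fun u => by
      rw [Real.norm_of_nonneg (stdNormalCDF_nonneg _)]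
      exact stdNormalCDF_le_one _)

theorem hasDerivAt_Gfun (ρ x y : ℝ) :
    HasDerivAt (Gfun ρ x)
      ((stdNormalCDF x - stdNormalCDF ((x - ρ * y) / √(1 - ρ ^ 2))) * stdNormalPDF y) y := by
  have hint := integrable_stdNormalCDF_comp_mul_stdNormalPDF
    (g := fun u => (x - ρ * u) / √(1 - ρ ^ 2)) (by fun_prop)
  have hcont : Continuous fun u => stdNormalCDF ((x - ρ * u) / √(1 - ρ ^ 2)) * stdNormalPDF u :=
    (continuous_stdNormalCDF.comp (by fun_prop)).mul continuous_stdNormalPDF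
  exact (((hasDerivAt_stdNormalCDF y).const_mul _).sub
    (hasDerivAt_setIntegral_Iic hint hcont.continuousAt)).congr_deriv (by ring)

theorem hasDerivAt_deriv_Gfun (ρ x y : ℝ) :
    HasDerivAt (deriv (Gfun ρ x))
      (-y * stdNormalPDF y * (stdNormalCDF x - stdNormalCDF ((x - ρ * y) / √(1 - ρ ^ 2))) +
        stdNormalPDF ((x - ρ * y) / √(1 - ρ ^ 2)) * (ρ / √(1 - ρ ^ 2)) * stdNormalPDF y)
      y := by
  rw [funext fun y => (hasDerivAt_Gfun ρ x y).deriv]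
  have harg : HasDerivAt (fun u => (x - ρ * u) / √(1 - ρ ^ 2)) (-ρ / √(1 - ρ ^ 2)) y := by
    simpa using (((hasDerivAt_id y).const_mul ρ).const_sub x).div_const (√(1 - ρ ^ 2))
  have hcdf : HasDerivAt (fun u => stdNormalCDF ((x - ρ * u) / √(1 - ρ ^ 2))) _ y :=
    (hasDerivAt_stdNormalCDF _).comp y harg
  exact ((hcdf.const_sub (stdNormalCDF x)).mul (hasDerivAt_stdNormalPDF y)).congr_deriv
    (by ring)

theorem sub_mul_ystar_div_sqrt {ρ : ℝ} (x : ℝ) (hρ0 : ρ ≠ 0) (hρ : ρ ^ 2 < 1) :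
    (x - ρ * ystar ρ x) / √(1 - ρ ^ 2) = x := by
  have hs : √(1 - ρ ^ 2) ≠ 0 := (Real.sqrt_pos.2 (by linarith)).ne'
  rw [ystar]
  field_simp
  ring

/-- For `ρ ∈ (−1,1)`, `ρ ≠ 0`, `x ∈ ℝ`: `G` is twice differentiable at
`y*` with `G″(y*) = φ(y*)·(ρ/√(1−ρ²))·φ(x)`; in particular `G″(y*) < 0` when `ρ < 0`
and `G″(y*) > 0` when `ρ > 0`. -/
theorem stmt4 (ρ x : ℝ) (hρ : ρ ∈ Set.Ioo (-1 : ℝ) 1) (hρ0 : ρ ≠ 0) :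
    HasDerivAt (deriv (Gfun ρ x))
        (stdNormalPDF (ystar ρ x) * (ρ / Real.sqrt (1 - ρ ^ 2)) * stdNormalPDF x) (ystar ρ x)
    ∧ (ρ < 0 → stdNormalPDF (ystar ρ x) * (ρ / Real.sqrt (1 - ρ ^ 2)) * stdNormalPDF x < 0)
    ∧ (0 < ρ → 0 < stdNormalPDF (ystar ρ x) * (ρ / Real.sqrt (1 - ρ ^ 2)) * stdNormalPDF x) := by
  have hρ2 : ρ ^ 2 < 1 := by nlinarith [hρ.1, hρ.2]
  have hs : 0 < √(1 - ρ ^ 2) := Real.sqrt_pos.2 (by linarith)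
  have hφy := stdNormalPDF_pos (ystar ρ x)
  have hφx := stdNormalPDF_pos x
  refine ⟨?_, fun hneg => ?_, fun hpos => ?_⟩
  · have h := hasDerivAt_deriv_Gfun ρ x (ystar ρ x)
    rw [sub_mul_ystar_div_sqrt x hρ0 hρ2, sub_self] at h
    exact h.congr_deriv (by ring)
  · exact mul_neg_of_neg_of_pos (mul_neg_of_pos_of_neg hφy (div_neg_of_neg_of_pos hneg hs)) hφx
  · exact mul_pos (mul_pos hφy (div_pos hpos hs)) hφx
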